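/- Let f be slice-regular on an axially symmetric domain Ω of a hypercomplex subspace M (associative case) with ∂̄_B f = 0. Then f is locally constant. Similarly, if f is anti-slice-regular (∂f/∂x = 0) and ∂_B f = 0, then f is locally constant. -/

import Mathlib

noncomputable section
namespace PaperStmt

variable {A : Type*} [NormedRing A] [NormedAlgebra ℝ A] {m : ℕ}

/-- Partial derivative in the `i`-th coordinate direction. -/
def pd (i : Fin (m + 1)) (f : (Fin (m + 1) → ℝ) → A) : (Fin (m + 1) → ℝ) → A :=
  fun x => fderiv ℝ f x (Pi.single i 1)

/-- The Cauchy–Riemann operator `∂̄_B = (1/2)(∂₀ + ∑ᵢ vᵢ ∂ᵢ)` induced by the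
basis `B = (1, v₁, …, v_m)` (so `v 0 = 1`). -/
def dbar (v : Fin (m + 1) → A) (f : (Fin (m + 1) → ℝ) → A) : (Fin (m + 1) → ℝ) → A :=
  fun x => (2 : ℝ)⁻¹ •
    (pd 0 f x + ∑ i ∈ Finset.univ.erase (0 : Fin (m + 1)), v i * pd i f x)

/-- The conjugated Cauchy–Riemann operator `∂_B = (1/2)(∂₀ - ∑ᵢ vᵢ ∂ᵢ)`. -/
def dconj (v : Fin (m + 1) → A) (f : (Fin (m + 1) → ℝ) → A) : (Fin (m + 1) → ℝ) → A :=
  fun x => (2 : ℝ)⁻¹ •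
    (pd 0 f x - ∑ i ∈ Finset.univ.erase (0 : Fin (m + 1)), v i * pd i f x)

/-- The Laplacian `Δ_B = ∑ᵢ ∂ᵢ²` of `M ≅ ℝ^{m+1}`. -/
def lap (f : (Fin (m + 1) → ℝ) → A) : (Fin (m + 1) → ℝ) → A :=
  fun x => ∑ i : Fin (m + 1), pd i (pd i f) x

/-- The norm `β = ‖Im x‖` of the imaginary part of the point with
coordinates `x`. -/
def nIm (x : Fin (m + 1) → ℝ) : ℝ :=
  Real.sqrt (∑ i ∈ Finset.univ.erase (0 : Fin (m + 1)), (x i) ^ 2)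

/-- The point `α + iβ` of the complex half-plane corresponding to `x`. -/
def zeta (x : Fin (m + 1) → ℝ) : ℂ := ⟨x 0, nIm x⟩

/-- The imaginary part `Im(x) = ∑_{i=1}^m xᵢ vᵢ` of the point of `M` with
coordinates `x`. -/
def imv (v : Fin (m + 1) → A) (x : Fin (m + 1) → ℝ) : A :=
  ∑ i ∈ Finset.univ.erase (0 : Fin (m + 1)), x i • v i

/-- The point of `M` with coordinates `x` w.r.t. the basis `(1, v₁, …, v_m)`. -/
def iot (v : Fin (m + 1) → A) (x : Fin (m + 1) → ℝ) : A :=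
  ∑ i : Fin (m + 1), x i • v i

/-- The slice function `I(F₁ + √-1 F₂)` induced on (the coordinates of) `M` by
the stem function with components `F₁, F₂`:
`f(α + Jβ) = F₁(α+iβ) + J F₂(α+iβ)` with `β = ‖Im x‖ ≥ 0`, `J = Im(x)/β`. -/
def sfun (v : Fin (m + 1) → A) (F₁ F₂ : ℂ → A) : (Fin (m + 1) → ℝ) → A :=
  fun x => F₁ (zeta x) + imv v x * ((nIm x)⁻¹ • F₂ (zeta x))

/-- The spherical derivative `f'ₛ(x) = β⁻¹ F₂(α+iβ)` of the slice function
induced by the stem components `(F₁, F₂)`. -/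
def sder (F₂ : ℂ → A) : (Fin (m + 1) → ℝ) → A :=
  fun x => (nIm x)⁻¹ • F₂ (zeta x)

/-- Real partial derivative of a stem component along `1 ∈ ℂ`. -/
def d1 (F : ℂ → A) (z : ℂ) : A := fderiv ℝ F z 1

/-- Real partial derivative of a stem component along `i ∈ ℂ`. -/
def dI (F : ℂ → A) (z : ℂ) : A := fderiv ℝ F z Complex.I

/-- The tangential operator `L_{ij} = xᵢ ∂ⱼ - xⱼ ∂ᵢ`. -/
def Lop (i j : Fin (m + 1)) (f : (Fin (m + 1) → ℝ) → A) : (Fin (m + 1) → ℝ) → A :=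
  fun x => x i • pd j f x - x j • pd i f x

/-- The spherical Dirac operator `Γ_B = -(1/2) ∑_{i,j=1}^m vᵢ (vⱼ L_{ij})`. -/
def Gam (v : Fin (m + 1) → A) (f : (Fin (m + 1) → ℝ) → A) : (Fin (m + 1) → ℝ) → A :=
  fun x => -((2 : ℝ)⁻¹ •
    ∑ i ∈ Finset.univ.erase (0 : Fin (m + 1)),
      ∑ j ∈ Finset.univ.erase (0 : Fin (m + 1)), v i * (v j * Lop i j f x))


/-!
At a point `x = α + β v₁` (`β > 0`) of the slice through `v₁`, the chain rule gives
`∂₀f = ∂_α F₁ + v₁ ∂_α F₂`, `∂₁f = ∂_β F₁ + v₁ ∂_β F₂` and, since `β = ‖Im x‖` is stationary in the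
other directions, `∂ⱼf = vⱼ β⁻¹ F₂` for `j ≥ 2`. With `vⱼ² = -1` the Cauchy–Riemann equations of
the stem cancel everything but `∂̄_B f(x) = -((m - 1)/(2β)) F₂(α + iβ)` (and `+` for `∂_B` under the
anti-holomorphic equations), so `F₂` vanishes on the upper half of `D`, hence on `D` by oddness.
The Cauchy–Riemann equations then force `dF₁ = 0`, and `f = F₁ ∘ ζ` is locally constant.
-/

open Finset

section PartialDerivative

variable {B : Type*} [NormedRing B] [NormedAlgebra ℝ B] {x : Fin (m + 1) → ℝ} {j : Fin (m + 1)}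

lemma pd_add {f g : (Fin (m + 1) → ℝ) → A} (hf : DifferentiableAt ℝ f x)
    (hg : DifferentiableAt ℝ g x) : pd j (fun y => f y + g y) x = pd j f x + pd j g x := by
  simp [pd, fderiv_fun_add hf hg]

lemma pd_mul {f g : (Fin (m + 1) → ℝ) → A} (hf : DifferentiableAt ℝ f x)
    (hg : DifferentiableAt ℝ g x) :
    pd j (fun y => f y * g y) x = pd j f x * g x + f x * pd j g x := by
  simp [pd, fderiv_fun_mul' hf hg, add_comm]

lemma pd_smul {c : (Fin (m + 1) → ℝ) → ℝ} {f : (Fin (m + 1) → ℝ) → A}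
    (hc : DifferentiableAt ℝ c x) (hf : DifferentiableAt ℝ f x) :
    pd j (fun y => c y • f y) x = pd j c x • f x + c x • pd j f x := by
  simp [pd, fderiv_fun_smul hc hf, add_comm]

lemma pd_comp {g : B → A} {f : (Fin (m + 1) → ℝ) → B} (hg : DifferentiableAt ℝ g (f x))
    (hf : DifferentiableAt ℝ f x) : pd j (fun y => g (f y)) x = fderiv ℝ g (f x) (pd j f x) := by
  simp [pd, fderiv_fun_comp x hg hf]

end PartialDerivative

section Coordinates

variable {x : Fin (m + 1) → ℝ} {j : Fin (m + 1)}

lemma hasFDerivAt_nIm (hx : nIm x ≠ 0) :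
    HasFDerivAt nIm
      ((nIm x)⁻¹ • ∑ i ∈ univ.erase 0, x i • ContinuousLinearMap.proj (R := ℝ) i) x := by
  have hsq : HasFDerivAt (fun y : Fin (m + 1) → ℝ => ∑ i ∈ univ.erase 0, y i ^ 2)
      (∑ i ∈ univ.erase 0, (2 * x i) • ContinuousLinearMap.proj (R := ℝ) i) x :=
    HasFDerivAt.fun_sum fun i _ => by
      simpa using ((ContinuousLinearMap.proj (R := ℝ) i).hasFDerivAt (x := x)).pow 2
  have hsum : ∑ i ∈ univ.erase 0, x i ^ 2 ≠ 0 := fun h => hx (by simp [nIm, h])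
  refine (hsq.sqrt hsum).congr_fderiv ?_
  rw [smul_sum, smul_sum]
  refine sum_congr rfl fun i _ => ?_
  rw [smul_smul, smul_smul, ← nIm]
  congr 1
  field_simp

lemma differentiableAt_nIm (hx : nIm x ≠ 0) : DifferentiableAt ℝ nIm x :=
  (hasFDerivAt_nIm hx).differentiableAt

lemma pd_nIm (hx : nIm x ≠ 0) : pd j nIm x = if j = 0 then 0 else x j / nIm x := by
  rw [pd, (hasFDerivAt_nIm hx).fderiv]
  by_cases hj : j = 0 <;> simp [hj, Pi.single_apply, div_eq_inv_mul]

lemma pd_inv_nIm (hx : nIm x ≠ 0) :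
    pd j (fun y => (nIm y)⁻¹) x = -(nIm x ^ 2)⁻¹ * pd j nIm x := by
  rw [pd_comp (differentiableAt_inv hx) (differentiableAt_nIm hx), fderiv_inv]
  simp [mul_comm]

lemma zeta_eq (x : Fin (m + 1) → ℝ) : zeta x = (x 0 : ℂ) + (nIm x : ℂ) * Complex.I := by
  apply Complex.ext <;> simp [zeta]

lemma hasFDerivAt_zeta (hx : nIm x ≠ 0) :
    HasFDerivAt zeta (Complex.ofRealCLM.comp (ContinuousLinearMap.proj (R := ℝ) 0)
      + (fderiv ℝ nIm x).smulRight Complex.I) x := by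
  rw [show (zeta : (Fin (m + 1) → ℝ) → ℂ) = fun y => (y 0 : ℂ) + nIm y • Complex.I from
    funext fun y => by simp [zeta_eq, Complex.real_smul]]
  exact (Complex.ofRealCLM.hasFDerivAt.comp x (hasFDerivAt_apply 0 x)).add
    ((differentiableAt_nIm hx).hasFDerivAt.smul_const Complex.I)

lemma differentiableAt_zeta (hx : nIm x ≠ 0) : DifferentiableAt ℝ zeta x :=
  (hasFDerivAt_zeta hx).differentiableAt

lemma pd_zeta (hx : nIm x ≠ 0) :
    pd j zeta x = if j = 0 then 1 else ((x j / nIm x : ℝ) : ℂ) * Complex.I := by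
  have hnIm := pd_nIm (j := j) hx
  rw [pd] at hnIm
  rw [pd, (hasFDerivAt_zeta hx).fderiv]
  rcases eq_or_ne j 0 with rfl | hj
  · simp_all
  · simp [hj, hnIm, Complex.real_smul]

lemma hasFDerivAt_imv (v : Fin (m + 1) → A) :
    HasFDerivAt (imv v)
      (∑ i ∈ univ.erase 0, (ContinuousLinearMap.proj (R := ℝ) i).smulRight (v i)) x :=
  HasFDerivAt.fun_sum fun i _ => (hasFDerivAt_apply i x).smul_const (v i)

lemma pd_imv (v : Fin (m + 1) → A) : pd j (imv v) x = if j = 0 then 0 else v j := by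
  rw [pd, (hasFDerivAt_imv v).fderiv]
  by_cases hj : j = 0 <;> simp [hj, Pi.single_apply]

end Coordinates

section SliceFunction

variable {x : Fin (m + 1) → ℝ} {j : Fin (m + 1)} {F : ℂ → A}

lemma differentiableAt_inv_nIm (hx : nIm x ≠ 0) : DifferentiableAt ℝ (fun y => (nIm y)⁻¹) x :=
  (differentiableAt_nIm hx).fun_inv hx

lemma differentiableAt_comp_zeta (hx : nIm x ≠ 0) (hF : DifferentiableAt ℝ F (zeta x)) :
    DifferentiableAt ℝ (fun y => F (zeta y)) x :=
  hF.comp x (differentiableAt_zeta hx)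

lemma differentiableAt_sder (hx : nIm x ≠ 0) (hF : DifferentiableAt ℝ F (zeta x)) :
    DifferentiableAt ℝ (sder F) x :=
  (differentiableAt_inv_nIm hx).fun_smul (differentiableAt_comp_zeta hx hF)

lemma pd_sder (hx : nIm x ≠ 0) (hF : DifferentiableAt ℝ F (zeta x)) :
    pd j (sder F) x = pd j (fun y => (nIm y)⁻¹) x • F (zeta x)
      + (nIm x)⁻¹ • fderiv ℝ F (zeta x) (pd j zeta x) := by
  rw [show sder F = fun y => (nIm y)⁻¹ • F (zeta y) from rfl,
    pd_smul (differentiableAt_inv_nIm hx) (differentiableAt_comp_zeta hx hF),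
    pd_comp hF (differentiableAt_zeta hx)]

lemma pd_sfun (v : Fin (m + 1) → A) {F₁ F₂ : ℂ → A} (hx : nIm x ≠ 0)
    (hF₁ : DifferentiableAt ℝ F₁ (zeta x)) (hF₂ : DifferentiableAt ℝ F₂ (zeta x)) :
    pd j (sfun v F₁ F₂) x = fderiv ℝ F₁ (zeta x) (pd j zeta x)
      + (pd j (imv v) x * sder F₂ x + imv v x * pd j (sder F₂) x) := by
  have himv : DifferentiableAt ℝ (imv v) x := (hasFDerivAt_imv v).differentiableAt
  have hprod : DifferentiableAt ℝ (fun y => imv v y * sder F₂ y) x :=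
    himv.fun_mul (differentiableAt_sder hx hF₂)
  rw [show sfun v F₁ F₂ = fun y => F₁ (zeta y) + imv v y * sder F₂ y from rfl,
    pd_add (differentiableAt_comp_zeta hx hF₁) hprod, pd_comp hF₁ (differentiableAt_zeta hx),
    pd_mul himv (differentiableAt_sder hx hF₂)]

end SliceFunction

/-- The coordinates of `Re z + Im z • v i`, the point of the slice `ℂ_{v i}` corresponding
to `z`. -/
def slicePoint (i : Fin (m + 1)) (z : ℂ) : Fin (m + 1) → ℝ :=
  fun j => if j = 0 then z.re else if j = i then z.im else 0

section SlicePoint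

variable {i j : Fin (m + 1)} {z : ℂ}

lemma nIm_slicePoint (hi : i ≠ 0) (hz : 0 ≤ z.im) : nIm (slicePoint i z) = z.im := by
  rw [nIm, sum_eq_single_of_mem i (mem_erase.mpr ⟨hi, mem_univ i⟩)]
  · simp [slicePoint, hi, Real.sqrt_sq hz]
  · intro j hj hji
    simp [slicePoint, (mem_erase.mp hj).1, hji]

lemma zeta_slicePoint (hi : i ≠ 0) (hz : 0 ≤ z.im) : zeta (slicePoint i z) = z := by
  apply Complex.ext
  · simp [zeta, slicePoint]
  · simp [zeta, nIm_slicePoint hi hz]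

lemma imv_slicePoint (v : Fin (m + 1) → A) (hi : i ≠ 0) :
    imv v (slicePoint i z) = z.im • v i := by
  rw [imv, sum_eq_single_of_mem i (mem_erase.mpr ⟨hi, mem_univ i⟩)]
  · simp [slicePoint, hi]
  · intro j hj hji
    simp [slicePoint, (mem_erase.mp hj).1, hji]

lemma sder_slicePoint (F : ℂ → A) (hi : i ≠ 0) (hz : 0 ≤ z.im) :
    sder F (slicePoint i z) = z.im⁻¹ • F z := by
  rw [sder, nIm_slicePoint hi hz, zeta_slicePoint hi hz]

lemma pd_nIm_slicePoint (hi : i ≠ 0) (hz : 0 < z.im) :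
    pd j nIm (slicePoint i z) = if j = i then 1 else 0 := by
  rw [pd_nIm (by rw [nIm_slicePoint hi hz.le]; exact hz.ne'), nIm_slicePoint hi hz.le]
  by_cases hj : j = 0
  · simp [hj, Ne.symm hi]
  · by_cases hji : j = i <;> simp [slicePoint, hj, hji, hi, hz.ne']

lemma pd_zeta_slicePoint (hi : i ≠ 0) (hz : 0 < z.im) :
    pd j zeta (slicePoint i z) = if j = 0 then 1 else if j = i then Complex.I else 0 := by
  rw [pd_zeta (by rw [nIm_slicePoint hi hz.le]; exact hz.ne'), nIm_slicePoint hi hz.le]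
  by_cases hj : j = 0
  · simp [hj]
  · by_cases hji : j = i <;> simp [slicePoint, hj, hji, hi, hz.ne']

lemma pd_inv_nIm_slicePoint (hi : i ≠ 0) (hz : 0 < z.im) :
    pd j (fun y => (nIm y)⁻¹) (slicePoint i z) = if j = i then -(z.im ^ 2)⁻¹ else 0 := by
  rw [pd_inv_nIm (by rw [nIm_slicePoint hi hz.le]; exact hz.ne'), pd_nIm_slicePoint hi hz,
    nIm_slicePoint hi hz.le]
  split_ifs <;> simp

end SlicePoint

section SliceRegular

variable {v : Fin (m + 1) → A} {F₁ F₂ : ℂ → A} {i j : Fin (m + 1)} {z : ℂ}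

lemma pd_sfun_slicePoint (hi : i ≠ 0) (hz : 0 < z.im)
    (hF₁ : DifferentiableAt ℝ F₁ z) (hF₂ : DifferentiableAt ℝ F₂ z) :
    pd j (sfun v F₁ F₂) (slicePoint i z) = fderiv ℝ F₁ z (pd j zeta (slicePoint i z))
      + (pd j (imv v) (slicePoint i z) * (z.im⁻¹ • F₂ z) + z.im • v i *
        (pd j (fun y => (nIm y)⁻¹) (slicePoint i z) • F₂ z
          + z.im⁻¹ • fderiv ℝ F₂ z (pd j zeta (slicePoint i z)))) := by
  have hx : nIm (slicePoint i z) ≠ 0 := by rw [nIm_slicePoint hi hz.le]; exact hz.ne'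
  rw [← zeta_slicePoint hi hz.le] at hF₁ hF₂
  rw [pd_sfun v hx hF₁ hF₂, pd_sder hx hF₂, imv_slicePoint v hi, sder_slicePoint F₂ hi hz.le,
    nIm_slicePoint hi hz.le, zeta_slicePoint hi hz.le]

lemma pd_zero_sfun_slicePoint (hi : i ≠ 0) (hz : 0 < z.im)
    (hF₁ : DifferentiableAt ℝ F₁ z) (hF₂ : DifferentiableAt ℝ F₂ z) :
    pd 0 (sfun v F₁ F₂) (slicePoint i z) = d1 F₁ z + v i * d1 F₂ z := by
  rw [pd_sfun_slicePoint hi hz hF₁ hF₂, pd_zeta_slicePoint hi hz, pd_inv_nIm_slicePoint hi hz,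
    pd_imv, d1, d1]
  simp [Ne.symm hi, smul_smul, hz.ne']

lemma pd_self_sfun_slicePoint (hi : i ≠ 0) (hz : 0 < z.im)
    (hF₁ : DifferentiableAt ℝ F₁ z) (hF₂ : DifferentiableAt ℝ F₂ z) :
    pd i (sfun v F₁ F₂) (slicePoint i z) = dI F₁ z + v i * dI F₂ z := by
  rw [pd_sfun_slicePoint hi hz hF₁ hF₂, pd_zeta_slicePoint hi hz, pd_inv_nIm_slicePoint hi hz,
    pd_imv, dI, dI]
  simp only [hi, if_false, if_true, mul_add, smul_mul_assoc, mul_smul_comm, smul_smul]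
  match_scalars <;> field_simp
  ring

lemma pd_sfun_slicePoint_of_ne (hi : i ≠ 0) (hz : 0 < z.im) (hj0 : j ≠ 0) (hji : j ≠ i)
    (hF₁ : DifferentiableAt ℝ F₁ z) (hF₂ : DifferentiableAt ℝ F₂ z) :
    pd j (sfun v F₁ F₂) (slicePoint i z) = v j * (z.im⁻¹ • F₂ z) := by
  rw [pd_sfun_slicePoint hi hz hF₁ hF₂, pd_zeta_slicePoint hi hz, pd_inv_nIm_slicePoint hi hz,
    pd_imv]
  simp [hj0, hji]

lemma sum_mul_pd_sfun_slicePoint (hsq : ∀ j : Fin (m + 1), j ≠ 0 → v j * v j = -1)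
    (hi : i ≠ 0) (hz : 0 < z.im) (hF₁ : DifferentiableAt ℝ F₁ z)
    (hF₂ : DifferentiableAt ℝ F₂ z) :
    ∑ j ∈ univ.erase 0, v j * pd j (sfun v F₁ F₂) (slicePoint i z)
      = v i * dI F₁ z - dI F₂ z - (((m : ℝ) - 1) / z.im) • F₂ z := by
  have hiS : i ∈ univ.erase 0 := mem_erase.mpr ⟨hi, mem_univ i⟩
  have hm : 1 ≤ m := Nat.one_le_iff_ne_zero.mpr (by rintro rfl; exact hi (Fin.fin_one_eq_zero i))
  have hrest : ∀ j ∈ (univ.erase 0).erase i,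
      v j * pd j (sfun v F₁ F₂) (slicePoint i z) = -(z.im⁻¹ • F₂ z) := by
    intro j hj
    obtain ⟨hji, hj0, -⟩ := mem_erase.mp hj |>.imp_right mem_erase.mp
    rw [pd_sfun_slicePoint_of_ne hi hz hj0 hji hF₁ hF₂, ← mul_assoc, hsq j hj0, neg_one_mul]
  have hcard : ((univ.erase 0).erase i).card = m - 1 := by
    rw [card_erase_of_mem hiS, card_erase_of_mem (mem_univ _), card_univ, Fintype.card_fin]
    omega
  rw [← add_sum_erase _ _ hiS, sum_congr rfl hrest, sum_const, hcard,
    pd_self_sfun_slicePoint hi hz hF₁ hF₂, mul_add, ← mul_assoc, hsq i hi,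
    ← Nat.cast_smul_eq_nsmul ℝ, Nat.cast_sub hm, Nat.cast_one, neg_one_mul, smul_neg, smul_smul, div_eq_mul_inv]
  abel

lemma dbar_sfun_slicePoint (hsq : ∀ j : Fin (m + 1), j ≠ 0 → v j * v j = -1)
    (hi : i ≠ 0) (hz : 0 < z.im) (hF₁ : DifferentiableAt ℝ F₁ z)
    (hF₂ : DifferentiableAt ℝ F₂ z) :
    dbar v (sfun v F₁ F₂) (slicePoint i z) = (2 : ℝ)⁻¹ •
      (d1 F₁ z - dI F₂ z + v i * (d1 F₂ z + dI F₁ z) - (((m : ℝ) - 1) / z.im) • F₂ z) := by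
  rw [dbar, pd_zero_sfun_slicePoint hi hz hF₁ hF₂, sum_mul_pd_sfun_slicePoint hsq hi hz hF₁ hF₂,
    mul_add]
  congr 1
  abel

lemma dconj_sfun_slicePoint (hsq : ∀ j : Fin (m + 1), j ≠ 0 → v j * v j = -1)
    (hi : i ≠ 0) (hz : 0 < z.im) (hF₁ : DifferentiableAt ℝ F₁ z)
    (hF₂ : DifferentiableAt ℝ F₂ z) :
    dconj v (sfun v F₁ F₂) (slicePoint i z) = (2 : ℝ)⁻¹ •
      (d1 F₁ z + dI F₂ z + v i * (d1 F₂ z - dI F₁ z) + (((m : ℝ) - 1) / z.im) • F₂ z) := by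
  rw [dconj, pd_zero_sfun_slicePoint hi hz hF₁ hF₂, sum_mul_pd_sfun_slicePoint hsq hi hz hF₁ hF₂,
    mul_sub]
  congr 1
  abel

end SliceRegular

section Stem

variable {D : Set ℂ} {F F₁ F₂ : ℂ → A}

lemma eq_zero_of_odd_of_forall_im_pos (hDsym : ∀ z ∈ D, (starRingEnd ℂ) z ∈ D)
    (hodd : ∀ z ∈ D, F ((starRingEnd ℂ) z) = -F z) (hpos : ∀ z ∈ D, 0 < z.im → F z = 0) :
    ∀ z ∈ D, F z = 0 := by
  intro z hz
  rcases lt_trichotomy z.im 0 with hneg | hreal | hpos'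
  · have h := hodd z hz
    rw [hpos _ (hDsym z hz) (by simpa using hneg)] at h
    exact neg_eq_zero.mp h.symm
  · have h := hodd z hz
    rw [Complex.conj_eq_iff_im.mpr hreal] at h
    have h2 : (2 : ℝ) • F z = 0 := by
      rw [two_smul]
      nth_rewrite 1 [h]
      exact neg_add_cancel _
    exact (smul_eq_zero.mp h2).resolve_left two_ne_zero
  · exact hpos z hz hpos'

lemma sub_one_div_im_ne_zero (hm : 2 ≤ m) {z : ℂ} (hz : 0 < z.im) : ((m : ℝ) - 1) / z.im ≠ 0 :=
  div_ne_zero (sub_ne_zero.mpr (by exact_mod_cast (by omega : m ≠ 1))) hz.ne'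

variable {v : Fin (m + 1) → A}

lemma eq_zero_of_dbar_sfun_eq_zero (hm : 2 ≤ m) (hsq : ∀ j : Fin (m + 1), j ≠ 0 → v j * v j = -1)
    (hD : IsOpen D) (hF₁ : DifferentiableOn ℝ F₁ D) (hF₂ : DifferentiableOn ℝ F₂ D)
    (hCR : ∀ z ∈ D, d1 F₁ z = dI F₂ z ∧ dI F₁ z = -(d1 F₂ z))
    (hker : ∀ x : Fin (m + 1) → ℝ, zeta x ∈ D → nIm x ≠ 0 → dbar v (sfun v F₁ F₂) x = 0) :
    ∀ z ∈ D, 0 < z.im → F₂ z = 0 := by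
  intro z hz hpos
  have hi : (1 : Fin (m + 1)) ≠ 0 := Fin.one_eq_zero_iff.not.mpr (by omega)
  have h := hker (slicePoint 1 z) (by rwa [zeta_slicePoint hi hpos.le])
    (by rw [nIm_slicePoint hi hpos.le]; exact hpos.ne')
  rw [dbar_sfun_slicePoint hsq hi hpos (hF₁.differentiableAt (hD.mem_nhds hz))
    (hF₂.differentiableAt (hD.mem_nhds hz)), (hCR z hz).1, (hCR z hz).2] at h
  simpa [sub_one_div_im_ne_zero hm hpos] using h

lemma eq_zero_of_dconj_sfun_eq_zero (hm : 2 ≤ m) (hsq : ∀ j : Fin (m + 1), j ≠ 0 → v j * v j = -1)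
    (hD : IsOpen D) (hF₁ : DifferentiableOn ℝ F₁ D) (hF₂ : DifferentiableOn ℝ F₂ D)
    (hCR : ∀ z ∈ D, d1 F₁ z = -(dI F₂ z) ∧ dI F₁ z = d1 F₂ z)
    (hker : ∀ x : Fin (m + 1) → ℝ, zeta x ∈ D → nIm x ≠ 0 → dconj v (sfun v F₁ F₂) x = 0) :
    ∀ z ∈ D, 0 < z.im → F₂ z = 0 := by
  intro z hz hpos
  have hi : (1 : Fin (m + 1)) ≠ 0 := Fin.one_eq_zero_iff.not.mpr (by omega)
  have h := hker (slicePoint 1 z) (by rwa [zeta_slicePoint hi hpos.le])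
    (by rw [nIm_slicePoint hi hpos.le]; exact hpos.ne')
  rw [dconj_sfun_slicePoint hsq hi hpos (hF₁.differentiableAt (hD.mem_nhds hz))
    (hF₂.differentiableAt (hD.mem_nhds hz)), (hCR z hz).1, (hCR z hz).2] at h
  simpa [sub_one_div_im_ne_zero hm hpos] using h

lemma fderiv_eq_zero_of_d1_dI {z : ℂ} (h1 : d1 F z = 0) (hI : dI F z = 0) :
    fderiv ℝ F z = 0 := by
  refine ContinuousLinearMap.coe_injective (Complex.basisOneI.ext fun k => ?_)
  fin_cases k
  · simpa [d1] using h1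
  · simpa [dI] using hI

lemma fderiv_eq_zero_of_forall_mem_eq_zero (hD : IsOpen D) (hF : ∀ z ∈ D, F z = 0) {z : ℂ}
    (hz : z ∈ D) : fderiv ℝ F z = 0 := by
  rw [(Filter.eventuallyEq_of_mem (hD.mem_nhds hz) hF).fderiv_eq]
  exact fderiv_const_apply 0

lemma continuous_zeta : Continuous (zeta (m := m)) := by
  simp only [funext zeta_eq, nIm]
  fun_prop

lemma exists_isOpen_sfun_eq (v : Fin (m + 1) → A) (hD : IsOpen D)
    (hF₁ : DifferentiableOn ℝ F₁ D) (hF₂ : ∀ z ∈ D, F₂ z = 0)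
    (hdF₁ : ∀ z ∈ D, d1 F₁ z = 0 ∧ dI F₁ z = 0) {x : Fin (m + 1) → ℝ} (hx : zeta x ∈ D) :
    ∃ U : Set (Fin (m + 1) → ℝ), IsOpen U ∧ x ∈ U ∧
      ∀ y ∈ U, zeta y ∈ D → sfun v F₁ F₂ y = sfun v F₁ F₂ x := by
  obtain ⟨r, hr, hball⟩ := Metric.isOpen_iff.mp hD _ hx
  refine ⟨zeta ⁻¹' Metric.ball (zeta x) r, Metric.isOpen_ball.preimage continuous_zeta,
    Metric.mem_ball_self hr, fun y hy hyD => ?_⟩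
  have hsfun : ∀ w, zeta w ∈ D → sfun v F₁ F₂ w = F₁ (zeta w) := fun w hw => by
    simp [sfun, hF₂ _ hw]
  rw [hsfun y hyD, hsfun x hx]
  exact Metric.isOpen_ball.is_const_of_fderiv_eq_zero (convex_ball _ _).isPreconnected
    (hF₁.mono hball) (fun w hw => fderiv_eq_zero_of_d1_dI (hdF₁ w (hball hw)).1
      (hdF₁ w (hball hw)).2) hy (Metric.mem_ball_self hr)

end Stem

theorem kernel_dbar_locally_constant_general
    (hm : 2 ≤ m)
    (v : Fin (m + 1) → A)
    (hsq : ∀ i : Fin (m + 1), i ≠ 0 → v i * v i = -1)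
    (D : Set ℂ) (hD : IsOpen D) (hDsym : ∀ z ∈ D, (starRingEnd ℂ) z ∈ D)
    (F₁ F₂ : ℂ → A)
    (hs2 : ∀ z ∈ D, F₂ ((starRingEnd ℂ) z) = -F₂ z)
    (hF1 : ContDiffOn ℝ 1 F₁ D) (hF2 : ContDiffOn ℝ 1 F₂ D) :
    ((∀ z ∈ D, d1 F₁ z = dI F₂ z ∧ dI F₁ z = -(d1 F₂ z)) →
      (∀ x : Fin (m + 1) → ℝ, zeta x ∈ D → nIm x ≠ 0 →
        dbar v (sfun v F₁ F₂) x = 0) →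
      ∀ x : Fin (m + 1) → ℝ, zeta x ∈ D →
        ∃ U : Set (Fin (m + 1) → ℝ), IsOpen U ∧ x ∈ U ∧
          ∀ y ∈ U, zeta y ∈ D → sfun v F₁ F₂ y = sfun v F₁ F₂ x) ∧
    ((∀ z ∈ D, d1 F₁ z = -(dI F₂ z) ∧ dI F₁ z = d1 F₂ z) →
      (∀ x : Fin (m + 1) → ℝ, zeta x ∈ D → nIm x ≠ 0 →
        dconj v (sfun v F₁ F₂) x = 0) →
      ∀ x : Fin (m + 1) → ℝ, zeta x ∈ D →
        ∃ U : Set (Fin (m + 1) → ℝ), IsOpen U ∧ x ∈ U ∧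
          ∀ y ∈ U, zeta y ∈ D → sfun v F₁ F₂ y = sfun v F₁ F₂ x) := by
  have hF₁ := hF1.differentiableOn one_ne_zero
  have hF₂ := hF2.differentiableOn one_ne_zero
  constructor
  · intro hCR hker x hx
    have hF₂0 := eq_zero_of_odd_of_forall_im_pos hDsym hs2
      (eq_zero_of_dbar_sfun_eq_zero hm hsq hD hF₁ hF₂ hCR hker)
    refine exists_isOpen_sfun_eq v hD hF₁ hF₂0 (fun z hz => ?_) hx
    simpa [d1, dI, fderiv_eq_zero_of_forall_mem_eq_zero hD hF₂0 hz] using hCR z hz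
  · intro hCR hker x hx
    have hF₂0 := eq_zero_of_odd_of_forall_im_pos hDsym hs2
      (eq_zero_of_dconj_sfun_eq_zero hm hsq hD hF₁ hF₂ hCR hker)
    refine exists_isOpen_sfun_eq v hD hF₁ hF₂0 (fun z hz => ?_) hx
    simpa [d1, dI, fderiv_eq_zero_of_forall_mem_eq_zero hD hF₂0 hz] using hCR z hz

/-- **Slice-regular functions in the kernel of `∂̄_B` are locally constant.**
Let `f` be a slice function on an axially symmetric domain
`Ω = {x : ζ(x) ∈ D}` of a hypercomplex subspace `M` (associative case),
induced by the stem `(F₁, F₂)`.  If `f` is slice-regular and `∂̄_B f = 0`, then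
`f` is locally constant on `Ω`.  Similarly, if `f` is anti-slice-regular
(`∂f/∂x = 0`) and `∂_B f = 0`, then `f` is locally constant on `Ω`. -/
theorem kernel_dbar_locally_constant
    (hm : 2 ≤ m)
    (v : Fin (m + 1) → A) (hv0 : v 0 = 1)
    (hsq : ∀ i : Fin (m + 1), i ≠ 0 → v i * v i = -1)
    (hanti : ∀ i j : Fin (m + 1), i ≠ 0 → j ≠ 0 → i ≠ j → v i * v j = -(v j * v i))
    (D : Set ℂ) (hD : IsOpen D) (hDsym : ∀ z ∈ D, (starRingEnd ℂ) z ∈ D)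
    (hconn : IsPreconnected {x : Fin (m + 1) → ℝ | zeta x ∈ D})
    (F₁ F₂ : ℂ → A)
    (hs1 : ∀ z ∈ D, F₁ ((starRingEnd ℂ) z) = F₁ z)
    (hs2 : ∀ z ∈ D, F₂ ((starRingEnd ℂ) z) = -F₂ z)
    (hF1 : ContDiffOn ℝ 1 F₁ D) (hF2 : ContDiffOn ℝ 1 F₂ D) :
    ((∀ z ∈ D, d1 F₁ z = dI F₂ z ∧ dI F₁ z = -(d1 F₂ z)) →
      (∀ x : Fin (m + 1) → ℝ, zeta x ∈ D → nIm x ≠ 0 →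
        dbar v (sfun v F₁ F₂) x = 0) →
      ∀ x : Fin (m + 1) → ℝ, zeta x ∈ D →
        ∃ U : Set (Fin (m + 1) → ℝ), IsOpen U ∧ x ∈ U ∧
          ∀ y ∈ U, zeta y ∈ D → sfun v F₁ F₂ y = sfun v F₁ F₂ x) ∧
    ((∀ z ∈ D, d1 F₁ z = -(dI F₂ z) ∧ dI F₁ z = d1 F₂ z) →
      (∀ x : Fin (m + 1) → ℝ, zeta x ∈ D → nIm x ≠ 0 →
        dconj v (sfun v F₁ F₂) x = 0) →
      ∀ x : Fin (m + 1) → ℝ, zeta x ∈ D →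
        ∃ U : Set (Fin (m + 1) → ℝ), IsOpen U ∧ x ∈ U ∧
          ∀ y ∈ U, zeta y ∈ D → sfun v F₁ F₂ y = sfun v F₁ F₂ x) :=
  kernel_dbar_locally_constant_general hm v hsq D hD hDsym F₁ F₂ hs2 hF1 hF2

end PaperStmt
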